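/- arXiv:1403.0950 — 2 statements merged into one kernel-verified Lean document; each statement's English description precedes it below -/
import Mathlib

section
/- Let T = Δ be the target concept and suppose Assumption A7 holds. Fix d = 2n_δ and m ≥ d, and for each I_d ∈ 𝓘_d let the compression function G_d return the hypothesis H_{I_d} = {δ ∈ Δ : g(x_d({δ_i}_{i∈I_d}), δ) ≤ 0}, where x_d({δ_i}_{i∈I_d}) is the minimizer of P_2[{δ_i}_{i∈I_d}]. Then G_d satisfies Assumption A1: (i) every H_{I_d} contains {δ_i}_{i∈I_d}; and (ii) for ℙ^m-almost every m-multisample there exists I_d ∈ 𝓘_d such that H_{I_d} contains all of δ_1,…,δ_m. -/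
open MeasureTheory

/-- Linear objective `cᵀx`. -/
def scenObj {nx : ℕ} (c x : Fin nx → ℝ) : ℝ := ∑ j, c j * x j

/-- `x` is a minimizer of `cᵀx` over `F`. -/
def isMinimizer {nx : ℕ} (c : Fin nx → ℝ) (F : Set (Fin nx → ℝ))
    (x : Fin nx → ℝ) : Prop :=
  x ∈ F ∧ ∀ y ∈ F, scenObj c x ≤ scenObj c y

/-- `B(p_S)`: the smallest axis-aligned hyper-rectangle containing the samples
`{δ_i}_{i∈S}`. -/
def sampleBox {nδ m : ℕ} (ω : Fin m → Fin nδ → ℝ) (S : Finset (Fin m)) :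
    Set (Fin nδ → ℝ) :=
  {δ | ∀ ℓ : Fin nδ, sInf ((fun i => ω i ℓ) '' (S : Set (Fin m))) ≤ δ ℓ ∧
    δ ℓ ≤ sSup ((fun i => ω i ℓ) '' (S : Set (Fin m)))}

/-- Feasibility region of the robust problem `P₂[{δ_i}_{i∈S}]`:
`{x ∈ 𝒳 : g(x,δ) ≤ 0 for all δ ∈ B(p_S)}`. -/
def robustFeas {nδ nx m : ℕ} (X : Set (Fin nx → ℝ))
    (g : (Fin nx → ℝ) → (Fin nδ → ℝ) → ℝ)
    (ω : Fin m → Fin nδ → ℝ) (S : Finset (Fin m)) : Set (Fin nx → ℝ) :=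
  {x | x ∈ X ∧ ∀ δ ∈ sampleBox ω S, g x δ ≤ 0}

/-- Proposition 5, probabilistically robust design: with target concept
`T = Δ`, under Assumption A7 (nonempty interior of the feasibility region and existence
and uniqueness of the minimizer of every robust problem `P₂`), the compression function
`H_I = {δ | g(x_d({δ_i}_{i∈I}), δ) ≤ 0}`, where `x_d` is the minimizer of
`P₂[{δ_i}_{i∈I}]`, satisfies Assumption A1 with `d = 2 n_δ`: (i) every `H_I` contains
its own subsample, and (ii) a.s. there exists an index set of cardinality `2 n_δ` whose
hypothesis contains all of `δ_1, …, δ_m`. -/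
theorem robust_design_satisfies_A1
    (nδ nx : ℕ) (P : Measure (Fin nδ → ℝ)) [IsProbabilityMeasure P]
    (X : Set (Fin nx → ℝ)) (c : Fin nx → ℝ) (g : (Fin nx → ℝ) → (Fin nδ → ℝ) → ℝ)
    (m : ℕ) (hm : 2 * nδ ≤ m)
    (hA7 : ∀ (ω : Fin m → Fin nδ → ℝ) (S : Finset (Fin m)),
      (interior (robustFeas X g ω S)).Nonempty ∧
        ∃! x : Fin nx → ℝ, isMinimizer c (robustFeas X g ω S) x)
    (xd : Finset (Fin m) → (Fin m → Fin nδ → ℝ) → (Fin nx → ℝ))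
    (hxd : ∀ (I : Finset (Fin m)) (ω : Fin m → Fin nδ → ℝ),
      isMinimizer c (robustFeas X g ω I) (xd I ω)) :
    (∀ I : Finset (Fin m), I.card = 2 * nδ →
      ∀ ω : Fin m → Fin nδ → ℝ, ∀ i ∈ I, g (xd I ω) (ω i) ≤ 0) ∧
    (∀ᵐ ω ∂(Measure.pi fun _ : Fin m => P),
      ∃ I : Finset (Fin m), I.card = 2 * nδ ∧ ∀ i : Fin m, g (xd I ω) (ω i) ≤ 0) := by
  constructor
  · intro I _ ω i hi
    refine (hxd I ω).1.2 (ω i) ?_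
    intro ℓ
    have hfin : ((fun j => ω j ℓ) '' (I : Set (Fin m))).Finite :=
      ((I : Set (Fin m)).toFinite).image _
    have hmem : ω i ℓ ∈ (fun j => ω j ℓ) '' (I : Set (Fin m)) := ⟨i, hi, rfl⟩
    exact ⟨csInf_le hfin.bddBelow hmem, le_csSup hfin.bddAbove hmem⟩
  · refine Filter.Eventually.of_forall ?_
    intro ω
    by_cases hnδ : nδ = 0
    · subst hnδ
      refine ⟨∅, by simp, fun i => ?_⟩
      refine (hxd ∅ ω).1.2 (ω i) (fun ℓ => ℓ.elim0)
    · have hm1 : 0 < m := by omega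
      haveI : Nonempty (Fin m) := ⟨⟨0, hm1⟩⟩
      have hmin : ∀ ℓ : Fin nδ, ∃ j ∈ Finset.univ, ∀ k ∈ Finset.univ,
          ω j ℓ ≤ ω k ℓ := fun ℓ =>
        Finset.exists_min_image Finset.univ (fun j => ω j ℓ) Finset.univ_nonempty
      have hmax : ∀ ℓ : Fin nδ, ∃ j ∈ Finset.univ, ∀ k ∈ Finset.univ,
          ω k ℓ ≤ ω j ℓ := fun ℓ =>
        Finset.exists_max_image Finset.univ (fun j => ω j ℓ) Finset.univ_nonempty
      choose jmin _ hjmin using hmin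
      choose jmax _ hjmax using hmax
      set J : Finset (Fin m) :=
        Finset.image jmin Finset.univ ∪ Finset.image jmax Finset.univ with hJ
      have hJcard : J.card ≤ 2 * nδ := by
        calc J.card ≤ (Finset.image jmin Finset.univ).card +
            (Finset.image jmax Finset.univ).card := Finset.card_union_le _ _
        _ ≤ nδ + nδ := by
            have h1 := Finset.card_image_le (s := (Finset.univ : Finset (Fin nδ))) (f := jmin)
            have h2 := Finset.card_image_le (s := (Finset.univ : Finset (Fin nδ))) (f := jmax)
            simp [Finset.card_univ] at h1 h2
            omega
        _ = 2 * nδ := by omega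
      obtain ⟨I, hJI, hIcard⟩ :=
        Finset.exists_superset_card_eq hJcard (by simpa using hm)
      refine ⟨I, hIcard, fun i => ?_⟩
      refine (hxd I ω).1.2 (ω i) ?_
      intro ℓ
      have hfin : ((fun j => ω j ℓ) '' (I : Set (Fin m))).Finite :=
        ((I : Set (Fin m)).toFinite).image _
      have hminI : jmin ℓ ∈ I := hJI (by simp [hJ])
      have hmaxI : jmax ℓ ∈ I := hJI (by simp [hJ])
      constructor
      · exact le_trans (csInf_le hfin.bddBelow ⟨jmin ℓ, hminI, rfl⟩)
          (hjmin ℓ i (Finset.mem_univ i))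
      · exact le_trans (hjmax ℓ i (Finset.mem_univ i))
          (le_csSup hfin.bddAbove ⟨jmax ℓ, hmaxI, rfl⟩)
end

section
/- Let T = Δ be the target concept and suppose Assumption A7 holds. Fix d = 2n_δ and m ≥ d. Then for every ε ∈ (0,1): ℙ^m{(δ_1,…,δ_m) ∈ Δ^m : ℙ(δ ∈ Δ : g(x_m, δ) > 0) > ε} ≤ binom(m,d)·(1−ε)^{m−d}, where x_m is the minimizer of P_2[{δ_i}_{i=1}^m]. -/
/-!
A feasible design can violate the constraint only outside the sample box `B(p_m)`, so it is
enough to bound the probability that the box has mass `< 1 - ε`. The box is already spanned by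
the (at most `d = 2 n_δ`) samples attaining the coordinatewise minima and maxima, hence it is
the box of some `d`-element set `I` of samples and contains all the others. For a fixed `I`,
conditionally on the samples in `I` the other `m - d` independent samples all fall into a set of
mass `< 1 - ε` with probability at most `(1 - ε)^(m - d)`; a union bound over the `binom(m, d)`
choices of `I` concludes.
-/

open MeasureTheory

open Finset
open scoped ENNReal

def boxHull {ι κ : Type*} (y : ι → κ → ℝ) : Set (κ → ℝ) :=
  {δ | ∀ ℓ, ⨅ i, y i ℓ ≤ δ ℓ ∧ δ ℓ ≤ ⨆ i, y i ℓ}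

theorem sampleBox_eq_boxHull {nδ m : ℕ} (ω : Fin m → Fin nδ → ℝ) (S : Finset (Fin m)) :
    sampleBox ω S = boxHull fun i : S => ω i := by
  simp only [sampleBox, boxHull, sInf_image', sSup_image']
  rfl

theorem Continuous.ciInf_of_finite {ι X L : Type*} [Finite ι] [TopologicalSpace X]
    [ConditionallyCompleteLinearOrder L] [TopologicalSpace L] [OrderClosedTopology L]
    {f : ι → X → L} (hf : ∀ i, Continuous (f i)) : Continuous fun x => ⨅ i, f i x := by
  cases isEmpty_or_nonempty ι
  · simp only [iInf_of_isEmpty]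
    exact continuous_const
  · have := Fintype.ofFinite ι
    simp only [← inf'_univ_eq_ciInf]
    exact Continuous.finset_inf'_apply univ_nonempty fun i _ => hf i

theorem isClosed_setOf_mem_boxHull {ι κ : Type*} [Finite ι] :
    IsClosed {q : (ι → κ → ℝ) × (κ → ℝ) | q.2 ∈ boxHull q.1} := by
  have hset : {q : (ι → κ → ℝ) × (κ → ℝ) | q.2 ∈ boxHull q.1} =
      ⋂ ℓ, {q | ⨅ i, q.1 i ℓ ≤ q.2 ℓ} ∩ {q | q.2 ℓ ≤ ⨆ i, q.1 i ℓ} := by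
    ext; simp [boxHull]
  rw [hset]
  have hcoord : ∀ (ℓ : κ) (i : ι), Continuous fun q : (ι → κ → ℝ) × (κ → ℝ) => q.1 i ℓ :=
    fun ℓ i => (continuous_apply ℓ).comp ((continuous_apply i).comp continuous_fst)
  refine isClosed_iInter fun ℓ => ?_
  have hδ : Continuous fun q : (ι → κ → ℝ) × (κ → ℝ) => q.2 ℓ :=
    (continuous_apply ℓ).comp continuous_snd
  exact (isClosed_le (Continuous.ciInf_of_finite (hcoord ℓ)) hδ).inter
    -- `⨆` in `ℝ` is `⨅` in `ℝᵒᵈ`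
    (isClosed_le hδ (Continuous.ciInf_of_finite (L := ℝᵒᵈ) (hcoord ℓ)))

theorem mem_sampleBox {nδ m : ℕ} (ω : Fin m → Fin nδ → ℝ) {S : Finset (Fin m)} {i : Fin m}
    (hi : i ∈ S) : ω i ∈ sampleBox ω S := fun _ =>
  ⟨csInf_le ((S.finite_toSet.image _).bddBelow) (Set.mem_image_of_mem _ hi),
    le_csSup ((S.finite_toSet.image _).bddAbove) (Set.mem_image_of_mem _ hi)⟩

theorem exists_card_eq_sampleBox_eq {nδ m : ℕ} (ω : Fin m → Fin nδ → ℝ) (S : Finset (Fin m))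
    {d : ℕ} (hd : 2 * nδ ≤ d) (hdS : d ≤ S.card) :
    ∃ I ⊆ S, I.card = d ∧ sampleBox ω I = sampleBox ω S := by
  rcases S.eq_empty_or_nonempty with rfl | hS
  · exact ⟨∅, subset_rfl, by simpa [eq_comm] using hdS, rfl⟩
  choose a haS ha using fun ℓ => S.exists_min_image (fun i => ω i ℓ) hS
  choose b hbS hb using fun ℓ => S.exists_max_image (fun i => ω i ℓ) hS
  have hextremal : (univ.image a ∪ univ.image b).card ≤ d := by
    calc _ ≤ (univ.image a).card + (univ.image b).card := card_union_le _ _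
      _ ≤ nδ + nδ := by gcongr <;> exact card_image_le.trans (by simp)
      _ ≤ d := by omega
  obtain ⟨I, hI, hIS, hIcard⟩ := exists_subsuperset_card_eq
    (union_subset (by simpa [image_subset_iff] using haS)
      (by simpa [image_subset_iff] using hbS)) hextremal hdS
  have haI : ∀ ℓ, a ℓ ∈ I := fun ℓ => hI (by simp)
  have hbI : ∀ ℓ, b ℓ ∈ I := fun ℓ => hI (by simp)
  have hinf : ∀ ℓ (T : Finset (Fin m)), a ℓ ∈ T → T ⊆ S →
      sInf ((fun i => ω i ℓ) '' (T : Set (Fin m))) = ω (a ℓ) ℓ := fun ℓ T haT hTS =>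
    IsLeast.csInf_eq ⟨Set.mem_image_of_mem _ haT,
      Set.forall_mem_image.2 fun j hj => ha ℓ j (hTS hj)⟩
  have hsup : ∀ ℓ (T : Finset (Fin m)), b ℓ ∈ T → T ⊆ S →
      sSup ((fun i => ω i ℓ) '' (T : Set (Fin m))) = ω (b ℓ) ℓ := fun ℓ T hbT hTS =>
    IsGreatest.csSup_eq ⟨Set.mem_image_of_mem _ hbT,
      Set.forall_mem_image.2 fun j hj => hb ℓ j (hTS hj)⟩
  refine ⟨I, hIS, hIcard, Set.ext fun δ => forall_congr' fun ℓ => ?_⟩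
  rw [hinf ℓ I (haI ℓ) hIS, hinf ℓ S (haS ℓ) subset_rfl, hsup ℓ I (hbI ℓ) hIS,
    hsup ℓ S (hbS ℓ) subset_rfl]

theorem measure_pi_forall_mem_of_lt_compl_le {ι α : Type*} [Fintype ι] [MeasurableSpace α]
    (μ : Measure α) [IsProbabilityMeasure μ] (p : ι → Prop) [DecidablePred p]
    (K : ({i // p i} → α) → Set α)
    (hK : MeasurableSet {q : ({i // p i} → α) × α | q.2 ∈ K q.1}) (r : ℝ≥0∞) :
    Measure.pi (fun _ : ι => μ)
        {ω | r < μ (K fun i => ω i)ᶜ ∧ ∀ i, ¬ p i → ω i ∈ K fun i => ω i} ≤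
      (1 - r) ^ Fintype.card {i // ¬ p i} := by
  set G : Set (({i // p i} → α) × ({i // ¬ p i} → α)) :=
    {q | r < μ (K q.1)ᶜ} ∩ ⋂ i, {q | q.2 i ∈ K q.1}
  have hKy : ∀ y, MeasurableSet (K y) := fun y => hK.preimage measurable_prodMk_left
  have hG : MeasurableSet G := by
    refine (measurableSet_lt measurable_const ?_).inter (.iInter fun i => ?_)
    · exact (measurable_measure_prodMk_left hK.compl).comp measurable_fst
    · exact hK.preimage (measurable_fst.prodMk ((measurable_pi_apply i).comp measurable_snd))
  have hslice : ∀ y, Measure.pi (fun _ : {i // ¬ p i} => μ) (Prod.mk y ⁻¹' G) ≤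
      (1 - r) ^ Fintype.card {i // ¬ p i} := by
    intro y
    by_cases hy : r < μ (K y)ᶜ
    · have : Prod.mk y ⁻¹' G = Set.univ.pi fun _ => K y := by
        ext z; simp [G, hy, Set.mem_pi]
      rw [this, Measure.pi_pi, prod_const, card_univ]
      gcongr
      calc μ (K y) = 1 - μ (K y)ᶜ := by rw [← prob_compl_eq_one_sub (hKy y).compl, compl_compl]
        _ ≤ 1 - r := tsub_le_tsub_left hy.le 1
    · have : Prod.mk y ⁻¹' G = ∅ := by
        ext z; simp [G, hy]
      simp [this]
  calc Measure.pi (fun _ : ι => μ)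
        {ω | r < μ (K fun i => ω i)ᶜ ∧ ∀ i, ¬ p i → ω i ∈ K fun i => ω i}
      = Measure.pi (fun _ : ι => μ) (MeasurableEquiv.piEquivPiSubtypeProd _ p ⁻¹' G) := by
        congr 1; ext ω; simp [G]
    _ = ((Measure.pi fun _ => μ).prod (Measure.pi fun _ => μ)) G :=
        (measurePreserving_piEquivPiSubtypeProd _ p).measure_preimage hG.nullMeasurableSet
    _ = ∫⁻ y, Measure.pi (fun _ => μ) (Prod.mk y ⁻¹' G) ∂Measure.pi fun _ => μ :=
        Measure.prod_apply hG
    _ ≤ ∫⁻ _, (1 - r) ^ Fintype.card {i // ¬ p i} ∂Measure.pi fun _ => μ :=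
        lintegral_mono hslice
    _ = (1 - r) ^ Fintype.card {i // ¬ p i} := by simp

theorem measure_pi_sampleBox_le {nδ m : ℕ} (P : Measure (Fin nδ → ℝ)) [IsProbabilityMeasure P]
    (I : Finset (Fin m)) (r : ℝ≥0∞) :
    Measure.pi (fun _ : Fin m => P)
        {ω | r < P (sampleBox ω I)ᶜ ∧ ∀ i ∉ I, ω i ∈ sampleBox ω I} ≤
      (1 - r) ^ (m - I.card) := by
  have hcard : Fintype.card {i // i ∉ I} = m - I.card := by
    simp [Fintype.card_subtype_compl]
  simpa only [← sampleBox_eq_boxHull, hcard] using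
    measure_pi_forall_mem_of_lt_compl_le P (· ∈ I) boxHull
      isClosed_setOf_mem_boxHull.measurableSet r

theorem measure_pi_sampleBox_compl_le {nδ m : ℕ} (P : Measure (Fin nδ → ℝ))
    [IsProbabilityMeasure P] (hm : 2 * nδ ≤ m) (r : ℝ≥0∞) :
    Measure.pi (fun _ : Fin m => P) {ω | r < P (sampleBox ω univ)ᶜ} ≤
      m.choose (2 * nδ) * (1 - r) ^ (m - 2 * nδ) := by
  have hcover : {ω : Fin m → Fin nδ → ℝ | r < P (sampleBox ω univ)ᶜ} ⊆
      ⋃ I ∈ powersetCard (2 * nδ) univ,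
        {ω | r < P (sampleBox ω I)ᶜ ∧ ∀ i ∉ I, ω i ∈ sampleBox ω I} := by
    intro ω hω
    obtain ⟨I, -, hIcard, hI⟩ := exists_card_eq_sampleBox_eq ω univ le_rfl (by simpa using hm)
    exact Set.mem_biUnion (mem_powersetCard.2 ⟨subset_univ I, hIcard⟩)
      ⟨hI ▸ hω, fun i _ => hI ▸ mem_sampleBox ω (mem_univ i)⟩
  calc _ ≤ ∑ I ∈ powersetCard (2 * nδ) univ, Measure.pi (fun _ : Fin m => P)
          {ω | r < P (sampleBox ω I)ᶜ ∧ ∀ i ∉ I, ω i ∈ sampleBox ω I} :=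
        (measure_mono hcover).trans (measure_biUnion_finset_le _ _)
    _ ≤ ∑ I ∈ powersetCard (2 * nδ) univ, (1 - r) ^ (m - 2 * nδ) :=
        sum_le_sum fun I hI => by
          simpa [(mem_powersetCard.1 hI).2] using measure_pi_sampleBox_le P I r
    _ = m.choose (2 * nδ) * (1 - r) ^ (m - 2 * nδ) := by
        simp [card_powersetCard, nsmul_eq_mul]

theorem robust_design_violation_bound_general
    (nδ nx : ℕ) (P : Measure (Fin nδ → ℝ)) [IsProbabilityMeasure P]
    (X : Set (Fin nx → ℝ)) (c : Fin nx → ℝ) (g : (Fin nx → ℝ) → (Fin nδ → ℝ) → ℝ)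
    (m : ℕ) (hm : 2 * nδ ≤ m)
    (xm : (Fin m → Fin nδ → ℝ) → (Fin nx → ℝ))
    (hxm : ∀ ω : Fin m → Fin nδ → ℝ,
      isMinimizer c (robustFeas X g ω Finset.univ) (xm ω))
    (ε : ℝ) (hε0 : 0 < ε) (hε1 : ε < 1) :
    (Measure.pi fun _ : Fin m => P)
      {ω : Fin m → Fin nδ → ℝ |
        ENNReal.ofReal ε < P {δ : Fin nδ → ℝ | 0 < g (xm ω) δ}} ≤
      ENNReal.ofReal ((m.choose (2 * nδ) : ℝ) * (1 - ε) ^ (m - 2 * nδ)) := by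
  have hviolation : ∀ ω, {δ | 0 < g (xm ω) δ} ⊆ (sampleBox ω univ)ᶜ :=
    fun ω δ hδ hbox => ((hxm ω).1.2 δ hbox).not_gt hδ
  calc _ ≤ Measure.pi (fun _ : Fin m => P)
          {ω | ENNReal.ofReal ε < P (sampleBox ω univ)ᶜ} :=
        measure_mono fun ω hω => hω.trans_le (measure_mono (hviolation ω))
    _ ≤ m.choose (2 * nδ) * (1 - ENNReal.ofReal ε) ^ (m - 2 * nδ) :=
        measure_pi_sampleBox_compl_le P hm _
    _ = ENNReal.ofReal ((m.choose (2 * nδ) : ℝ) * (1 - ε) ^ (m - 2 * nδ)) := by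
        rw [ENNReal.ofReal_mul (by positivity), ENNReal.ofReal_pow (by linarith),
          ENNReal.ofReal_sub _ hε0.le, ENNReal.ofReal_one, ENNReal.ofReal_natCast]

/-- Corollary 3, probabilistically robust design: under Assumption A7,
the minimizer `x_m` of `P₂[{δ_i}_{i=1}^m]` satisfies, with `d = 2 n_δ ≤ m` and for
every `ε ∈ (0,1)`, `ℙ^m { ℙ(g(x_m, δ) > 0) > ε } ≤ binom(m,d) (1-ε)^(m-d)`. -/
theorem robust_design_violation_bound
    (nδ nx : ℕ) (P : Measure (Fin nδ → ℝ)) [IsProbabilityMeasure P]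
    (X : Set (Fin nx → ℝ)) (c : Fin nx → ℝ) (g : (Fin nx → ℝ) → (Fin nδ → ℝ) → ℝ)
    (m : ℕ) (hm : 2 * nδ ≤ m)
    (hA7 : ∀ (ω : Fin m → Fin nδ → ℝ) (S : Finset (Fin m)),
      (interior (robustFeas X g ω S)).Nonempty ∧
        ∃! x : Fin nx → ℝ, isMinimizer c (robustFeas X g ω S) x)
    (xm : (Fin m → Fin nδ → ℝ) → (Fin nx → ℝ))
    (hxm : ∀ ω : Fin m → Fin nδ → ℝ,
      isMinimizer c (robustFeas X g ω Finset.univ) (xm ω))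
    (ε : ℝ) (hε0 : 0 < ε) (hε1 : ε < 1) :
    (Measure.pi fun _ : Fin m => P)
      {ω : Fin m → Fin nδ → ℝ |
        ENNReal.ofReal ε < P {δ : Fin nδ → ℝ | 0 < g (xm ω) δ}} ≤
      ENNReal.ofReal ((m.choose (2 * nδ) : ℝ) * (1 - ε) ^ (m - 2 * nδ)) :=
  robust_design_violation_bound_general nδ nx P X c g m hm xm hxm ε hε0 hε1
end
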